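/- arXiv:1512.05107 — 9 statements merged into one kernel-verified Lean document; each statement's English description precedes it below -/
import Mathlib

section
/- Let (A, 𝔪) be a Noetherian local ring of Krull dimension d ≥ 2 with infinite residue field A/𝔪, and suppose the order function of 𝔪 is additive in the following sense: whenever a ∈ 𝔪^i \ 𝔪^{i+1} and b ∈ 𝔪^j \ 𝔪^{j+1}, then ab ∉ 𝔪^{i+j+1} (equivalently, the associated graded ring G_𝔪(A) is a domain). Then for every integer s ≥ 1 there exists an element u ∈ 𝔪^s \ 𝔪^{s+1} such that u is a nonzerodivisor on A and there are at least s pairwise distinct prime ideals of A of height one containing u. -/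
/-!
Additivity of the `𝔪`-adic order makes `A` a domain and makes a product of `s` elements of order
one have order exactly `s`. Since `dim A ≥ 2`, Krull's principal ideal theorem shows that `𝔪` is not
minimal over any principal ideal, so for `x ∈ 𝔪 \ 𝔪²` prime avoidance yields `y ∈ 𝔪 \ 𝔪²` outside
every minimal prime of `(x)`. For lifts `cᵢ` of distinct residues, `zᵢ = x + cᵢ y` has order one
for all but at most one `i`, and lies in a height-one prime `pᵢ`. If `pᵢ = pⱼ` for `i ≠ j`, then
`x, y ∈ pᵢ`, so `pᵢ` strictly contains a minimal prime of `(x)`, of height `≥ 1`; hence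
`ht pᵢ ≥ 2`. Take `u = ∏ zᵢ`.
-/

open IsLocalRing

def Ideal.IsOrderAdditive {R : Type*} [CommRing R] (I : Ideal R) : Prop :=
  ∀ (i j : ℕ) (a b : R), a ∈ I ^ i → a ∉ I ^ (i + 1) → b ∈ I ^ j → b ∉ I ^ (j + 1) →
    a * b ∉ I ^ (i + j + 1)

namespace Ideal

variable {R : Type*} [CommRing R]

theorem exists_mem_pow_notMem_pow_succ_of_iInf_pow_eq_bot {I : Ideal R} (hI : ⨅ n, I ^ n = ⊥)
    {a : R} (ha : a ≠ 0) : ∃ i, a ∈ I ^ i ∧ a ∉ I ^ (i + 1) := by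
  by_contra! h
  have hmem : ∀ n, a ∈ I ^ n := fun n => by
    induction n with
    | zero => simp
    | succ n ih => exact h n ih
  exact ha (by simpa [hI] using mem_iInf.mpr hmem)

namespace IsOrderAdditive

variable {I : Ideal R}

theorem noZeroDivisors (hadd : I.IsOrderAdditive) (hI : ⨅ n, I ^ n = ⊥) : NoZeroDivisors R where
  eq_zero_or_eq_zero_of_mul_eq_zero {a b} hab := by
    by_contra! h
    obtain ⟨i, hai, hai'⟩ := exists_mem_pow_notMem_pow_succ_of_iInf_pow_eq_bot hI h.1
    obtain ⟨j, hbj, hbj'⟩ := exists_mem_pow_notMem_pow_succ_of_iInf_pow_eq_bot hI h.2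
    exact hadd i j a b hai hai' hbj hbj' (hab ▸ zero_mem _)

theorem prod_mem_pow_notMem_pow_succ (hadd : I.IsOrderAdditive) (hI : I ≠ ⊤) {n : ℕ}
    (f : Fin n → R) (hf : ∀ i, f i ∈ I) (hf' : ∀ i, f i ∉ I ^ 2) :
    ∏ i, f i ∈ I ^ n ∧ ∏ i, f i ∉ I ^ (n + 1) := by
  induction n with
  | zero => simpa [← Ideal.eq_top_iff_one] using hI
  | succ n ih =>
    obtain ⟨hmem, hnotMem⟩ := ih (fun i => f i.castSucc) (fun i => hf _) (fun i => hf' _)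
    rw [Fin.prod_univ_castSucc, pow_succ]
    exact ⟨mul_mem_mul hmem (hf _),
      hadd n 1 _ _ hmem hnotMem (by simpa using hf _) (hf' (Fin.last n))⟩

end IsOrderAdditive

theorem mem_of_add_mul_mem_of_isUnit_sub {I : Ideal R} {x y a b : R} (hab : IsUnit (a - b))
    (ha : x + a * y ∈ I) (hb : x + b * y ∈ I) : y ∈ I ∧ x ∈ I := by
  have hy : y ∈ I := by
    rw [← unit_mul_mem_iff_mem I hab]
    simpa [sub_mul] using sub_mem ha hb
  refine ⟨hy, ?_⟩
  simpa using sub_mem ha (mul_mem_left I a hy)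

theorem two_le_height_of_mem_of_forall_notMem_minimalPrimes {x y : R}
    (hx : x ∈ nonZeroDivisors R) (hy : ∀ q ∈ (span {x}).minimalPrimes, y ∉ q)
    {p : Ideal R} [p.IsPrime] (hxp : x ∈ p) (hyp : y ∈ p) : 2 ≤ p.height := by
  obtain ⟨q, hq, hqp⟩ := exists_minimalPrimes_le ((span_singleton_le_iff_mem _).mpr hxp)
  have := hq.isPrime
  have hlt : q < p := lt_of_le_of_ne hqp (by rintro rfl; exact hy _ hq hyp)
  calc (2 : ℕ∞) = 1 + 1 := by norm_num
    _ ≤ q.height + 1 := by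
      gcongr
      exact (one_le_height_span_singleton_of_mem_nonZeroDivisors hx).trans (height_mono hq.1.2)
    _ ≤ p.height := height_add_one_le_of_lt_of_isPrime hlt

end Ideal

theorem PrimeSpectrum.exists_injective_height_eq_one_add_mul_mem {R : Type*} [CommRing R]
    [IsNoetherianRing R] {x y : R} (hx : x ∈ nonZeroDivisors R)
    (hy : ∀ q ∈ (Ideal.span {x}).minimalPrimes, y ∉ q) {n : ℕ} {c : Fin n → R}
    (hc : Pairwise fun i j => IsUnit (c i - c j)) (hz : ∀ i, x + c i * y ∈ nonZeroDivisors R)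
    (hz' : ∀ i, ¬IsUnit (x + c i * y)) :
    ∃ P : Fin n → PrimeSpectrum R, Function.Injective P ∧
      ∀ i, Order.height (P i) = 1 ∧ x + c i * y ∈ (P i).asIdeal := by
  have hp : ∀ i, ∃ p : Ideal R, ∃ _ : p.IsPrime, ∃ _ : Ideal.span {x + c i * y} ≤ p,
      p.height = (1 : ℕ) := fun i =>
    Ideal.exists_isPrime_height_eq
      (Ideal.height_span_singleton_eq_one_of_mem_nonZeroDivisors (hz i) (hz' i))
  choose p hprime hzp hph using hp
  refine ⟨fun i => ⟨p i, hprime i⟩, fun i j hij => ?_, fun i =>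
    ⟨by simpa [← height_eq_orderHeight] using hph i, hzp i (Ideal.mem_span_singleton_self _)⟩⟩
  by_contra hne
  have hpij : p i = p j := congrArg asIdeal hij
  obtain ⟨hyp, hxp⟩ := Ideal.mem_of_add_mul_mem_of_isUnit_sub (hc hne)
    (hzp i (Ideal.mem_span_singleton_self _)) (hpij ▸ hzp j (Ideal.mem_span_singleton_self _))
  have := Ideal.two_le_height_of_mem_of_forall_notMem_minimalPrimes hx hy hxp hyp
  rw [hph i] at this
  norm_num at this

namespace IsLocalRing

variable {R : Type*} [CommRing R] [IsLocalRing R]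

theorem exists_pairwise_isUnit_sub_add_mul_notMem [Infinite (ResidueField R)] {I : Ideal R}
    {y : R} (hy : y ∉ I) (x : R) (n : ℕ) :
    ∃ c : Fin n → R, Pairwise (fun i j => IsUnit (c i - c j)) ∧ ∀ i, x + c i * y ∉ I := by
  let lift := Function.surjInv (residue_surjective (R := R))
  have hlift : ∀ r, residue R (lift r) = r := Function.surjInv_eq _
  have hunit : ∀ {r r'}, r ≠ r' → IsUnit (lift r - lift r') := fun hne => by
    rw [← notMem_maximalIdeal, ← residue_eq_zero_iff, map_sub, hlift, hlift]
    exact sub_ne_zero.mpr hne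
  let good : Set (ResidueField R) := {r | x + lift r * y ∉ I}
  have hbad : goodᶜ.Subsingleton := fun r hr r' hr' => by
    by_contra hne
    exact hy (Ideal.mem_of_add_mul_mem_of_isUnit_sub (hunit hne) (not_not.mp hr)
      (not_not.mp hr')).1
  have hgood : good.Infinite := by simpa using hbad.finite.infinite_compl
  let e := hgood.natEmbedding
  refine ⟨fun i => lift (e i), fun i j hij => hunit ?_, fun i => (e i).2⟩
  exact fun h => hij (Fin.ext (e.injective (Subtype.ext h)))

variable [IsNoetherianRing R]

theorem maximalIdeal_sq_lt_of_two_le_ringKrullDim (h : 2 ≤ ringKrullDim R) :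
    maximalIdeal R ^ 2 < maximalIdeal R :=
  maximalIdeal_sq_lt_of_ringKrullDim_ne_zero fun h0 => absurd (h0 ▸ h) (by decide)

theorem maximalIdeal_notMem_minimalPrimes_span_singleton (h : 2 ≤ ringKrullDim R) (x : R) :
    maximalIdeal R ∉ (Ideal.span {x}).minimalPrimes := by
  intro hm
  have hle := Ideal.height_le_one_of_isPrincipal_of_mem_minimalPrimes _ _ hm
  rw [← maximalIdeal_height_eq_ringKrullDim] at h
  have : (2 : ℕ∞) ≤ 1 := (WithBot.coe_le_coe.mp h).trans hle
  norm_num at this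

theorem exists_notMem_sq_notMem_minimalPrimes_span_singleton (h : 2 ≤ ringKrullDim R)
    (x : R) : ∃ y ∈ maximalIdeal R, y ∉ maximalIdeal R ^ 2 ∧
      ∀ q ∈ (Ideal.span {x}).minimalPrimes, y ∉ q := by
  classical
  have hfin := (Ideal.span {x}).finite_minimalPrimes_of_isNoetherianRing R
  by_contra! H
  have hcover : (maximalIdeal R : Set R) ⊆
      ⋃ q ∈ (↑(insert (maximalIdeal R ^ 2) hfin.toFinset) : Set (Ideal R)), (q : Set R) := by
    intro y hy
    by_cases hy2 : y ∈ maximalIdeal R ^ 2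
    · exact Set.mem_biUnion (by simp) hy2
    · obtain ⟨q, hq, hyq⟩ := H y hy hy2
      exact Set.mem_biUnion (by simp [hq]) hyq
  have hprime : ∀ q ∈ insert (maximalIdeal R ^ 2) hfin.toFinset, q ≠ maximalIdeal R ^ 2 →
      q ≠ maximalIdeal R ^ 2 → (id q).IsPrime := fun q hq hq2 _ =>
    (hfin.mem_toFinset.mp ((Finset.mem_insert.mp hq).resolve_left hq2)).isPrime
  obtain ⟨q, hq, hmq⟩ := (Ideal.subset_union_prime _ _ hprime).mp hcover
  rcases Finset.mem_insert.mp hq with rfl | hq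
  · exact (maximalIdeal_sq_lt_of_two_le_ringKrullDim h).not_ge hmq
  · have hqmin := hfin.mem_toFinset.mp hq
    have := hqmin.isPrime
    exact maximalIdeal_notMem_minimalPrimes_span_singleton h x
      ((le_antisymm (le_maximalIdeal this.ne_top) hmq) ▸ hqmin)

end IsLocalRing

theorem stmt_0_general (A : Type*) [CommRing A] [IsNoetherianRing A] [IsLocalRing A]
    (hdim : 2 ≤ ringKrullDim A)
    (hres : Infinite (A ⧸ maximalIdeal A))
    (hadd : ∀ (i j : ℕ) (a b : A),
      a ∈ maximalIdeal A ^ i → a ∉ maximalIdeal A ^ (i + 1) →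
      b ∈ maximalIdeal A ^ j → b ∉ maximalIdeal A ^ (j + 1) →
      a * b ∉ maximalIdeal A ^ (i + j + 1))
    (s : ℕ) :
    ∃ u : A, u ∈ maximalIdeal A ^ s ∧ u ∉ maximalIdeal A ^ (s + 1) ∧
      u ∈ nonZeroDivisors A ∧
      ∃ P : Fin s → PrimeSpectrum A, Function.Injective P ∧
        ∀ i, Order.height (P i) = 1 ∧ u ∈ (P i).asIdeal := by
  set m := maximalIdeal A
  have hm : m ≠ ⊤ := (maximalIdeal.isMaximal A).ne_top
  have hadd : m.IsOrderAdditive := hadd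
  have : NoZeroDivisors A := hadd.noZeroDivisors (Ideal.iInf_pow_eq_bot_of_isLocalRing m hm)
  have : IsDomain A := NoZeroDivisors.to_isDomain A
  have : Infinite (ResidueField A) := hres
  obtain ⟨x, hxm, hx2⟩ := SetLike.exists_of_lt (maximalIdeal_sq_lt_of_two_le_ringKrullDim hdim)
  obtain ⟨y, hym, hy2, hyx⟩ := exists_notMem_sq_notMem_minimalPrimes_span_singleton hdim x
  obtain ⟨c, hc, hcy⟩ := exists_pairwise_isUnit_sub_add_mul_notMem hy2 x s
  have hzm : ∀ i, x + c i * y ∈ m := fun i => add_mem hxm (Ideal.mul_mem_left _ _ hym)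
  obtain ⟨P, hPinj, hP⟩ := PrimeSpectrum.exists_injective_height_eq_one_add_mul_mem
    (mem_nonZeroDivisors_of_ne_zero (ne_of_mem_of_not_mem (zero_mem _) hx2).symm) hyx hc
    (fun i => mem_nonZeroDivisors_of_ne_zero (ne_of_mem_of_not_mem (zero_mem _) (hcy i)).symm)
    (fun i hu => hm (Ideal.eq_top_of_isUnit_mem _ (hzm i) hu))
  obtain ⟨hu, hu'⟩ := hadd.prod_mem_pow_notMem_pow_succ hm _ hzm hcy
  refine ⟨_, hu, hu', mem_nonZeroDivisors_of_ne_zero (ne_of_mem_of_not_mem (zero_mem _) hu').symm,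
    P, hPinj, fun i => ⟨(hP i).1, ?_⟩⟩
  exact Ideal.mem_of_dvd _ (Finset.dvd_prod_of_mem _ (Finset.mem_univ i)) (hP i).2

/-- Let `(A, 𝔪)` be a Noetherian local ring of Krull dimension `≥ 2` with infinite residue
field, such that the order function of `𝔪` is additive (equivalently, the associated graded
ring is a domain). Then for every `s ≥ 1` there is `u ∈ 𝔪^s \ 𝔪^{s+1}` which is a
nonzerodivisor on `A` such that at least `s` pairwise distinct height-one primes contain `u`. -/
theorem stmt_0 (A : Type*) [CommRing A] [IsNoetherianRing A] [IsLocalRing A]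
    (hdim : 2 ≤ ringKrullDim A)
    (hres : Infinite (A ⧸ maximalIdeal A))
    (hadd : ∀ (i j : ℕ) (a b : A),
      a ∈ maximalIdeal A ^ i → a ∉ maximalIdeal A ^ (i + 1) →
      b ∈ maximalIdeal A ^ j → b ∉ maximalIdeal A ^ (j + 1) →
      a * b ∉ maximalIdeal A ^ (i + j + 1))
    (s : ℕ) (hs : 1 ≤ s) :
    ∃ u : A, u ∈ maximalIdeal A ^ s ∧ u ∉ maximalIdeal A ^ (s + 1) ∧
      u ∈ nonZeroDivisors A ∧
      ∃ P : Fin s → PrimeSpectrum A, Function.Injective P ∧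
        ∀ i, Order.height (P i) = 1 ∧ u ∈ (P i).asIdeal :=
  stmt_0_general A hdim hres hadd s
end

section
/- Let (A, 𝔪) be a Noetherian local ring that is a unique factorization domain, and suppose the order function of 𝔪 is additive in the following sense: whenever a ∈ 𝔪^i \ 𝔪^{i+1} and b ∈ 𝔪^j \ 𝔪^{j+1}, then ab ∉ 𝔪^{i+j+1} (equivalently, the associated graded ring G_𝔪(A) is a domain). If u ∈ 𝔪^s \ 𝔪^{s+1} is nonzero, then the number of height-one prime ideals of A containing u is at most s. -/
/-!
A height-one prime containing `u` contains a prime factor `p` of `u`, hence equals `(p)`, because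
`(p)` is a nonzero prime ideal below it. So there are at most as many such primes as prime factors
of `u` counted with multiplicity, and `u`, being associated to the product of these non-units,
lies in `𝔪` to the power of their number.
-/

open IsLocalRing UniqueFactorizationMonoid

theorem Multiset.prod_mem_pow_card {R : Type*} [CommSemiring R] {I : Ideal R} (f : Multiset R)
    (hf : ∀ x ∈ f, x ∈ I) : f.prod ∈ I ^ Multiset.card f := by
  induction f using Multiset.induction_on with
  | empty => simp
  | cons a f ih =>
    rw [Multiset.prod_cons, Multiset.card_cons, pow_succ']
    exact Ideal.mul_mem_mul (hf a (Multiset.mem_cons_self a f))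
      (ih fun x hx ↦ hf x (Multiset.mem_cons_of_mem hx))

/-- Below a height-one prime there is only `⊥`, so the nonzero prime `(p)` inside it is all of it. -/
theorem PrimeSpectrum.asIdeal_eq_span_of_height_eq_one {A : Type*} [CommRing A] [IsDomain A]
    {p : A} (hp : Prime p) {Q : PrimeSpectrum A} (hQ : Order.height Q = 1)
    (hpQ : p ∈ Q.asIdeal) : Q.asIdeal = Ideal.span {p} := by
  refine (le_antisymm ((Ideal.span_singleton_le_iff_mem _).mpr hpQ) ?_).symm
  by_contra hlt
  let P : PrimeSpectrum A := ⟨Ideal.span {p}, (Ideal.span_singleton_prime hp.ne_zero).mpr hp⟩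
  let P₀ : PrimeSpectrum A := ⟨⊥, Ideal.isPrime_bot⟩
  have hP₀P : P₀ < P := by
    rw [← PrimeSpectrum.asIdeal_lt_asIdeal, bot_lt_iff_ne_bot]
    simpa [P, Ideal.span_singleton_eq_bot] using hp.ne_zero
  have hPQ : P < Q := lt_of_le_not_ge ((Ideal.span_singleton_le_iff_mem _).mpr hpQ) hlt
  exact (Order.one_lt_height_iff.mpr ⟨P, P₀, hP₀P, hPQ⟩).ne' hQ

theorem exists_mem_factors_asIdeal_eq_span {A : Type*} [CommRing A] [IsDomain A]
    [UniqueFactorizationMonoid A] {u : A} (hu : u ≠ 0) {Q : PrimeSpectrum A}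
    (hQ : Order.height Q = 1) (huQ : u ∈ Q.asIdeal) :
    ∃ p ∈ factors u, Q.asIdeal = Ideal.span {p} := by
  rw [← Ideal.mem_iff_of_associated (factors_prod hu)] at huQ
  obtain ⟨p, hpu, hpQ⟩ := (Q.2.multiset_prod_mem_iff_exists_mem _).mp huQ
  exact ⟨p, hpu, PrimeSpectrum.asIdeal_eq_span_of_height_eq_one (prime_of_factor p hpu) hQ hpQ⟩

theorem finite_and_ncard_le_card_factors {A : Type*} [CommRing A] [IsDomain A]
    [UniqueFactorizationMonoid A] {u : A} (hu : u ≠ 0) :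
    {P : PrimeSpectrum A | Order.height P = 1 ∧ u ∈ P.asIdeal}.Finite ∧
    {P : PrimeSpectrum A | Order.height P = 1 ∧ u ∈ P.asIdeal}.ncard ≤
      Multiset.card (factors u) := by
  classical
  set T : Set (Ideal A) := (fun p ↦ Ideal.span {p}) '' ↑(factors u).toFinset
  have hmaps : Set.MapsTo PrimeSpectrum.asIdeal
      {P : PrimeSpectrum A | Order.height P = 1 ∧ u ∈ P.asIdeal} T := by
    rintro Q ⟨hQ, huQ⟩
    obtain ⟨p, hpu, hQp⟩ := exists_mem_factors_asIdeal_eq_span hu hQ huQ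
    exact ⟨p, by simpa using hpu, hQp.symm⟩
  have hinj : Set.InjOn PrimeSpectrum.asIdeal
      {P : PrimeSpectrum A | Order.height P = 1 ∧ u ∈ P.asIdeal} :=
    fun _ _ _ _ ↦ PrimeSpectrum.ext
  have hT : T.Finite := (Finset.finite_toSet _).image _
  refine ⟨hT.of_injOn hmaps hinj, ?_⟩
  calc _ ≤ T.ncard := Set.ncard_le_ncard_of_injOn _ hmaps hinj hT
    _ ≤ (factors u).toFinset.card := by
      simpa only [Set.ncard_coe_finset] using Set.ncard_image_le (Finset.finite_toSet _)
    _ ≤ Multiset.card (factors u) := Multiset.toFinset_card_le _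

theorem card_factors_le_of_notMem_maximalIdeal_pow {A : Type*} [CommRing A] [IsLocalRing A]
    [IsDomain A] [UniqueFactorizationMonoid A] {u : A} (hu : u ≠ 0) {s : ℕ}
    (hs : u ∉ maximalIdeal A ^ (s + 1)) : Multiset.card (factors u) ≤ s := by
  by_contra! hlt
  refine hs (Ideal.pow_le_pow_right hlt ?_)
  rw [← Ideal.mem_iff_of_associated (factors_prod hu)]
  exact Multiset.prod_mem_pow_card _ fun p hp ↦
    (mem_maximalIdeal _).mpr (prime_of_factor p hp).not_isUnit

theorem stmt_1_general (A : Type*) [CommRing A] [IsLocalRing A]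
    [IsDomain A] [UniqueFactorizationMonoid A]
    (s : ℕ) (u : A) (hu' : u ∉ maximalIdeal A ^ (s + 1))
    (hne : u ≠ 0) :
    {P : PrimeSpectrum A | Order.height P = 1 ∧ u ∈ P.asIdeal}.Finite ∧
    {P : PrimeSpectrum A | Order.height P = 1 ∧ u ∈ P.asIdeal}.ncard ≤ s := by
  obtain ⟨hfin, hcard⟩ := finite_and_ncard_le_card_factors hne
  exact ⟨hfin, hcard.trans (card_factors_le_of_notMem_maximalIdeal_pow hne hu')⟩

/-- Let `(A, 𝔪)` be a Noetherian local ring which is a UFD, such that the order function of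
`𝔪` is additive (equivalently, the associated graded ring is a domain). If `u ∈ 𝔪^s \ 𝔪^{s+1}`
is nonzero, then the number of height-one primes of `A` containing `u` is at most `s`. -/
theorem stmt_1 (A : Type*) [CommRing A] [IsNoetherianRing A] [IsLocalRing A]
    [IsDomain A] [UniqueFactorizationMonoid A]
    (hadd : ∀ (i j : ℕ) (a b : A),
      a ∈ maximalIdeal A ^ i → a ∉ maximalIdeal A ^ (i + 1) →
      b ∈ maximalIdeal A ^ j → b ∉ maximalIdeal A ^ (j + 1) →
      a * b ∉ maximalIdeal A ^ (i + j + 1))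
    (s : ℕ) (u : A) (hu : u ∈ maximalIdeal A ^ s) (hu' : u ∉ maximalIdeal A ^ (s + 1))
    (hne : u ≠ 0) :
    {P : PrimeSpectrum A | Order.height P = 1 ∧ u ∈ P.asIdeal}.Finite ∧
    {P : PrimeSpectrum A | Order.height P = 1 ∧ u ∈ P.asIdeal}.ncard ≤ s :=
  stmt_1_general A s u hu' hne
end

section
/- Let k be an algebraically closed field and let m, n ≥ 2 be integers with gcd(m, n) = 1 such that mn is invertible in k (i.e., the image of m·n in k is nonzero). Then the polynomial Y^m − X^n is irreducible in the polynomial ring k[X, Y]. -/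
/-!
As a polynomial in `Y` over `k[X]`, `Y^m - X^n` is monic, so by Gauss's lemma it suffices to
prove irreducibility over `k(X)`. When `m` is odd, `Y^m - a` is irreducible over a field as soon
as `a` is not a `p`-th power for any prime `p ∣ m`; and `X^n = b^p` in `k(X)` forces `p ∣ n` by
comparing degrees, which coprimality rules out. Coprime exponents are never both even, and the
polynomial is symmetric in `(m, n)` up to swapping the variables and a sign.
-/

open MvPolynomial

namespace RatFunc

variable {K : Type*} [Field K]

theorem intDegree_pow (x : RatFunc K) (p : ℕ) : (x ^ p).intDegree = p * x.intDegree := by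
  by_cases hx : x = 0
  · subst hx
    cases p <;> simp [intDegree_one, intDegree_zero]
  induction p with
  | zero => simp [intDegree_one]
  | succ q ih =>
    rw [pow_succ, intDegree_mul (pow_ne_zero q hx) hx, ih]
    push_cast
    ring

theorem dvd_of_pow_eq_X_pow {x : RatFunc K} {p n : ℕ} (h : x ^ p = X ^ n) : p ∣ n := by
  have hdeg := congrArg intDegree h
  rw [intDegree_pow, intDegree_pow, intDegree_X, mul_one] at hdeg
  exact Int.natCast_dvd_natCast.mp ⟨_, hdeg.symm⟩

end RatFunc

open Polynomial in
theorem Polynomial.irreducible_X_pow_sub_C_X_pow {K : Type*} [Field K] {m n : ℕ} (hm : Odd m)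
    (hmn : m.Coprime n) : Irreducible (X ^ m - C (X ^ n) : K[X][X]) := by
  rw [(monic_X_pow_sub_C _ hm.pos.ne').irreducible_iff_irreducible_map_fraction_map
    (K := RatFunc K), Polynomial.map_sub, Polynomial.map_pow, map_X, map_C, map_pow,
    RatFunc.algebraMap_X]
  exact X_pow_sub_C_irreducible_of_odd hm fun p hp hpm b hb =>
    hp.ne_one (Nat.eq_one_of_dvd_coprimes hmn hpm (RatFunc.dvd_of_pow_eq_X_pow hb))

namespace MvPolynomial

theorem irreducible_X_one_pow_sub_X_zero_pow_of_odd {K : Type*} [Field K] {m n : ℕ}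
    (hm : Odd m) (hmn : m.Coprime n) :
    Irreducible ((X 1 : MvPolynomial (Fin 2) K) ^ m - X 0 ^ n) := by
  simpa using (Polynomial.irreducible_X_pow_sub_C_X_pow (K := K) hm hmn).map
    (Polynomial.Bivariate.equivMvPolynomial K)

theorem irreducible_X_one_pow_sub_X_zero_pow_comm {R : Type*} [CommRing R] (m n : ℕ) :
    Irreducible ((X 1 : MvPolynomial (Fin 2) R) ^ m - X 0 ^ n) ↔
      Irreducible ((X 1 : MvPolynomial (Fin 2) R) ^ n - X 0 ^ m) := by
  have hswap : renameEquiv R (Equiv.swap 0 1) ((X 1 : MvPolynomial (Fin 2) R) ^ m - X 0 ^ n) =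
      -(X 1 ^ n - X 0 ^ m) := by
    simp [Equiv.swap_apply_left, Equiv.swap_apply_right]
  rw [← MulEquiv.irreducible_iff (renameEquiv R (Equiv.swap 0 1)), hswap]
  exact (Associated.neg_left (Associated.refl _)).irreducible_iff

end MvPolynomial

theorem stmt_2_general (k : Type*) [Field k] (m n : ℕ) (hgcd : Nat.gcd m n = 1) :
    Irreducible ((X 1 : MvPolynomial (Fin 2) k) ^ m - (X 0) ^ n) := by
  rcases m.even_or_odd with hm | hm
  · have hn : Odd n := (Nat.Coprime.coprime_dvd_left hm.two_dvd hgcd).odd_of_left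
    exact (irreducible_X_one_pow_sub_X_zero_pow_comm n m).mp
      (irreducible_X_one_pow_sub_X_zero_pow_of_odd hn (Nat.Coprime.symm hgcd))
  · exact irreducible_X_one_pow_sub_X_zero_pow_of_odd hm hgcd

/-- Let `k` be an algebraically closed field and `m, n ≥ 2` integers with `gcd(m,n) = 1`
such that `m·n` is invertible in `k`. Then `Y^m − X^n` is irreducible in `k[X, Y]`. -/
theorem stmt_2 (k : Type*) [Field k] [IsAlgClosed k] (m n : ℕ)
    (hm : 2 ≤ m) (hn : 2 ≤ n) (hgcd : Nat.gcd m n = 1)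
    (hchar : ((m * n : ℕ) : k) ≠ 0) :
    Irreducible ((X 1 : MvPolynomial (Fin 2) k) ^ m - (X 0) ^ n) :=
  stmt_2_general k m n hgcd
end

section
/- Let k be an algebraically closed field, let d ≥ 2 be an integer, and let m, n ≥ 2 be integers with gcd(m, n) = 1 such that mn is invertible in k (i.e., the image of m·n in k is nonzero). Then the polynomial f = Y^m + X_1^n + X_2^n + ⋯ + X_d^n is irreducible in the polynomial ring k[X_1, …, X_d, Y]. -/
/-!
Since `gcd(m, n) = 1`, one of `m, n` is odd, and `Y` and `X_1` play symmetric roles, so `f` is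
`T ^ a + (Z ^ b + r)` over `R = k[X_2, …, X_d]` with `a` odd, `gcd(a, b) = 1` and `T ≠ Z`
variables. As a monic polynomial in `T` over the integrally closed domain `R[Z]`, it is
irreducible as soon as it is so over the fraction field, where by Kummer theory for odd exponents
it suffices that `-(Z ^ b + r)` is not a `p`-th power for any prime `p ∣ a`. A `p`-th root in the
fraction field is integral, hence lies in `R[Z]`, and comparing `Z`-degrees then gives `p ∣ b`.
-/

open scoped Polynomial

namespace Polynomial

variable {R : Type*} [CommRing R] [IsDomain R] [IsIntegrallyClosed R]

theorem X_pow_sub_C_irreducible_of_odd_of_isIntegrallyClosed {a : ℕ} (ha : Odd a) {c : R}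
    (hc : ∀ p : ℕ, p.Prime → p ∣ a → ∀ b : R, b ^ p ≠ c) :
    Irreducible (X ^ a - C c : R[X]) := by
  rw [(monic_X_pow_sub_C c ha.pos.ne').irreducible_iff_irreducible_map_fraction_map
      (K := FractionRing R), Polynomial.map_sub, Polynomial.map_pow, map_X, map_C]
  refine X_pow_sub_C_irreducible_of_odd ha fun p hp hpa b hb => ?_
  obtain ⟨y, rfl⟩ := IsIntegrallyClosed.exists_algebraMap_eq_of_isIntegral_pow
    (R := R) hp.pos (hb ▸ isIntegral_algebraMap)
  exact hc p hp hpa y (IsFractionRing.injective R (FractionRing R) (by rw [map_pow, hb]))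

theorem X_pow_add_C_X_pow_add_C_irreducible_of_odd {a b : ℕ} (ha : Odd a) (hab : a.Coprime b)
    (r : R) : Irreducible (X ^ a + C (X ^ b + C r) : R[X][X]) := by
  rw [← sub_neg_eq_add, ← map_neg]
  refine X_pow_sub_C_irreducible_of_odd_of_isIntegrallyClosed ha fun p hp hpa y hy => ?_
  have hpb : p * y.natDegree = b := by
    rw [← natDegree_pow, hy, natDegree_neg, natDegree_X_pow_add_C]
  exact hp.ne_one (Nat.eq_one_of_dvd_coprimes hab hpa ⟨_, hpb.symm⟩)

theorem X_pow_add_C_X_pow_add_C_irreducible {a b : ℕ} (hab : a.Coprime b) (r : R) :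
    Irreducible (X ^ a + C (X ^ b + C r) : R[X][X]) := by
  rcases Nat.even_or_odd a with ha | ha
  · have hb : Odd b := Nat.coprime_two_left.mp (Nat.Coprime.coprime_dvd_left ha.two_dvd hab)
    rw [← MulEquiv.irreducible_iff Bivariate.swap]
    convert X_pow_add_C_X_pow_add_C_irreducible_of_odd hb hab.symm r using 1
    simp only [map_add, map_pow, Bivariate.swap_C, Bivariate.swap_Y, Polynomial.map_X,
      Polynomial.map_C]
    ring
  · exact X_pow_add_C_X_pow_add_C_irreducible_of_odd ha hab r

end Polynomial

theorem finRotate_castSucc {n : ℕ} (i : Fin n) : finRotate (n + 1) i.castSucc = i.succ :=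
  Fin.ext (coe_finRotate_of_ne_last i.castSucc_ne_last)

namespace MvPolynomial

variable (R : Type*) [CommSemiring R] (e : ℕ)

noncomputable def bivariateEquiv :
    MvPolynomial (Fin (e + 2)) R ≃ₐ[R] (MvPolynomial (Fin e) R)[X][X] :=
  (renameEquiv R (finRotate (e + 2))).trans
    ((finSuccEquiv R (e + 1)).trans (Polynomial.mapAlgEquiv (finSuccEquiv R e)))

variable {R e}

theorem bivariateEquiv_X (i : Fin (e + 2)) :
    bivariateEquiv R e (X i) =
      (finSuccEquiv R (e + 1) (X (finRotate (e + 2) i))).map (finSuccEquiv R e) := by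
  simp only [bivariateEquiv, AlgEquiv.trans_apply, renameEquiv_apply, rename_X,
    Polynomial.coe_mapAlgEquiv]

@[simp]
theorem bivariateEquiv_X_last : bivariateEquiv R e (X (Fin.last (e + 1))) = Polynomial.X := by
  rw [bivariateEquiv_X, finRotate_last, finSuccEquiv_X_zero, Polynomial.map_X]

@[simp]
theorem bivariateEquiv_X_zero : bivariateEquiv R e (X 0) = Polynomial.C Polynomial.X := by
  rw [bivariateEquiv_X, ← Fin.castSucc_zero, finRotate_castSucc, finSuccEquiv_X_succ,
    Polynomial.map_C]
  exact congrArg Polynomial.C (finSuccEquiv_X_zero ..)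

@[simp]
theorem bivariateEquiv_X_succ_castSucc (i : Fin e) :
    bivariateEquiv R e (X i.castSucc.succ) = Polynomial.C (Polynomial.C (X i)) := by
  rw [bivariateEquiv_X, Fin.succ_castSucc, finRotate_castSucc, finSuccEquiv_X_succ,
    Polynomial.map_C]
  exact congrArg Polynomial.C (finSuccEquiv_X_succ ..)

end MvPolynomial

open MvPolynomial

theorem stmt_4_general (k : Type*) [Field k] (d m n : ℕ)
    (hd : 2 ≤ d) (hgcd : Nat.gcd m n = 1) :
    Irreducible ((X (Fin.last d) : MvPolynomial (Fin (d + 1)) k) ^ m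
      + ∑ i : Fin d, (X (Fin.castSucc i)) ^ n) := by
  obtain ⟨e, rfl⟩ : ∃ e, d = e + 1 := ⟨d - 1, by omega⟩
  rw [← MulEquiv.irreducible_iff (bivariateEquiv k e)]
  convert Polynomial.X_pow_add_C_X_pow_add_C_irreducible (R := MvPolynomial (Fin e) k) hgcd
    (∑ i : Fin e, X i ^ n) using 1
  simp [Fin.sum_univ_succ, map_sum]

/-- Let `k` be an algebraically closed field, `d ≥ 2`, and `m, n ≥ 2` integers with
`gcd(m,n) = 1` such that `m·n` is invertible in `k`. Then
`f = Y^m + X_1^n + ⋯ + X_d^n` is irreducible in `k[X_1, …, X_d, Y]`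
(here `Y` is the last variable of `Fin (d+1)` and `X_1, …, X_d` are the first `d`). -/
theorem stmt_4 (k : Type*) [Field k] [IsAlgClosed k] (d m n : ℕ)
    (hd : 2 ≤ d) (hm : 2 ≤ m) (hn : 2 ≤ n) (hgcd : Nat.gcd m n = 1)
    (hchar : ((m * n : ℕ) : k) ≠ 0) :
    Irreducible ((X (Fin.last d) : MvPolynomial (Fin (d + 1)) k) ^ m
      + ∑ i : Fin d, (X (Fin.castSucc i)) ^ n) :=
  stmt_4_general k d m n hd hgcd
end

section
/- Let k be an algebraically closed field, let d ≥ 2 be an integer, and let m, n ≥ 2 be integers with gcd(m, n) = 1 such that mn is invertible in k (i.e., the image of m·n in k is nonzero). Let a, b ≥ 1 be integers with a + b = n. Then the polynomial g = X^n + Y^m + X^a Z^b + W_3^n + W_4^n + ⋯ + W_d^n is irreducible in the polynomial ring k[X, Y, Z, W_3, …, W_d] (when d = 2 this ring is k[X, Y, Z] and g = X^n + Y^m + X^a Z^b). -/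
/-!
Viewed as a polynomial in `Y` over `R = k[X, Z, W_3, …, W_d]`, `g = Y ^ m + c` with
`c = X ^ n + X ^ a Z ^ b + ∑ W_j ^ n` homogeneous of degree `n`. `R` is
integrally closed, so by Gauss's lemma it suffices that `Y ^ m + c` is irreducible over its
fraction field. If `f` is an irreducible factor of degree `r` there, the norm of a root of `f` is
an `m`-th root of `(-c) ^ r`; writing it as `p / q` and comparing total degrees in
`p ^ m = (-c) ^ r q ^ m` gives `m ∣ r n`, hence `m ∣ r` and `f` has full degree `m`.
-/

open MvPolynomial

namespace Polynomial

theorem X_pow_sub_C_irreducible_of_forall_pow_eq_pow {K : Type*} [Field K] {m : ℕ} (hm : 0 < m)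
    {t : K} (H : ∀ (s : K) (r : ℕ), s ^ m = t ^ r → m ∣ r) : Irreducible (X ^ m - C t) := by
  have hne : X ^ m - C t ≠ 0 := X_pow_sub_C_ne_zero hm t
  have hu : ¬IsUnit (X ^ m - C t) := by
    rw [isUnit_iff_degree_eq_zero, degree_X_pow_sub_C hm, Nat.cast_eq_zero]
    exact hm.ne'
  obtain ⟨g, hg, hgt⟩ := WfDvdMonoid.exists_irreducible_factor hu hne
  have hdeg_le : g.natDegree ≤ m := (natDegree_le_of_dvd hgt hne).trans_eq natDegree_X_pow_sub_C
  suffices g.natDegree = m from (associated_of_dvd_of_natDegree_le hgt hne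
    (this.trans natDegree_X_pow_sub_C.symm).ge).irreducible hg
  have hnorm : Algebra.norm K (AdjoinRoot.root g) ^ m = t ^ g.natDegree := by
    have := eval₂_eq_zero_of_dvd_of_eval₂_eq_zero _ _ hgt (AdjoinRoot.eval₂_root g)
    rw [eval₂_sub, eval₂_pow, eval₂_C, eval₂_X, sub_eq_zero] at this
    rw [← map_pow, this, ← AdjoinRoot.algebraMap_eq, Algebra.norm_algebraMap,
      (AdjoinRoot.powerBasis hg.ne_zero).finrank, AdjoinRoot.powerBasis_dim hg.ne_zero]
  exact hdeg_le.antisymm (Nat.le_of_dvd hg.natDegree_pos (H _ _ hnorm))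

end Polynomial

namespace MvPolynomial

variable {σ : Type*}

section IsDomain

variable {R : Type*} [CommRing R] [IsDomain R]

theorem totalDegree_pow_of_isDomain {f : MvPolynomial σ R} (hf : f ≠ 0) (n : ℕ) :
    (f ^ n).totalDegree = n * f.totalDegree := by
  induction n with
  | zero => simp
  | succ n ih => rw [pow_succ, totalDegree_mul_of_isDomain (pow_ne_zero _ hf) hf, ih, add_one_mul]

theorem IsHomogeneous.dvd_of_pow_eq_pow_mul_pow {c x y : MvPolynomial σ R} {m n r : ℕ}
    (hc : c.IsHomogeneous n) (hc0 : c ≠ 0) (hmn : m.Coprime n) (hx : x ≠ 0) (hy : y ≠ 0)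
    (h : x ^ m = c ^ r * y ^ m) : m ∣ r := by
  have hdeg := congrArg MvPolynomial.totalDegree h
  rw [totalDegree_mul_of_isDomain (pow_ne_zero _ hc0) (pow_ne_zero _ hy),
    totalDegree_pow_of_isDomain hx, totalDegree_pow_of_isDomain hc0,
    totalDegree_pow_of_isDomain hy, hc.totalDegree hc0] at hdeg
  refine hmn.dvd_of_dvd_mul_right ⟨x.totalDegree - y.totalDegree, ?_⟩
  rw [Nat.mul_sub, hdeg]
  omega

end IsDomain

variable {k : Type*} [Field k]

theorem irreducible_X_pow_add_C_of_isHomogeneous {c : MvPolynomial σ k} {m n : ℕ} (hm : 0 < m)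
    (hc : c.IsHomogeneous n) (hc0 : c ≠ 0) (hmn : m.Coprime n) :
    Irreducible (Polynomial.X ^ m + Polynomial.C c) := by
  let K := FractionRing (MvPolynomial σ k)
  have hmonic : (Polynomial.X ^ m + Polynomial.C c).Monic :=
    Polynomial.monic_X_pow_add (Polynomial.degree_C_le.trans_lt (by exact_mod_cast hm))
  rw [hmonic.irreducible_iff_irreducible_map_fraction_map (K := K), Polynomial.map_add,
    Polynomial.map_pow, Polynomial.map_X, Polynomial.map_C, ← sub_neg_eq_add,
    ← Polynomial.C_neg]
  refine Polynomial.X_pow_sub_C_irreducible_of_forall_pow_eq_pow hm fun s r hs => ?_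
  obtain ⟨x, y, hy, rfl⟩ := IsFractionRing.div_surjective (A := MvPolynomial σ k) s
  have hyK : algebraMap _ K y ≠ 0 := IsFractionRing.to_map_ne_zero_of_mem_nonZeroDivisors hy
  have hcK : algebraMap _ K c ≠ 0 := (map_ne_zero_iff _ (IsFractionRing.injective _ K)).2 hc0
  have hx : x ≠ 0 := by
    rintro rfl
    rw [map_zero, zero_div, zero_pow hm.ne', eq_comm] at hs
    exact pow_ne_zero _ (neg_ne_zero.2 hcK) hs
  refine hc.neg.dvd_of_pow_eq_pow_mul_pow (neg_ne_zero.2 hc0) hmn hx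
    (nonZeroDivisors.ne_zero hy) (IsFractionRing.injective _ K ?_)
  rw [map_pow, map_mul, map_pow, map_pow, map_neg, ← hs, div_pow,
    div_mul_cancel₀ _ (pow_ne_zero _ hyK)]

theorem irreducible_X_pow_add_of_mem_supported (i : σ) {c : MvPolynomial σ k} {m n : ℕ}
    (hm : 0 < m) (hci : c ∈ supported k {i}ᶜ) (hc : c.IsHomogeneous n) (hc0 : c ≠ 0)
    (hmn : m.Coprime n) : Irreducible (X i ^ m + c) := by
  classical
  obtain ⟨c, rfl⟩ := exists_rename_eq_of_vars_subset_range c ((↑) : {j // j ≠ i} → σ)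
    Subtype.val_injective (by rwa [Subtype.range_coe_subtype, ← mem_supported])
  let A := (renameEquiv k (Equiv.optionSubtypeNe i).symm).trans (optionEquivLeft k {j // j ≠ i})
  have hAX : A (X i) = Polynomial.X := by
    simp [A, optionEquivLeft_X_none]
  have hArename : A.toAlgHom.comp (rename (↑)) = Polynomial.CAlgHom := by
    refine algHom_ext fun j => ?_
    simp [A, Equiv.optionSubtypeNe_symm_of_ne j.2, optionEquivLeft_X_some]
  have hAc : A (rename (↑) c) = Polynomial.C c := congrArg (· c) hArename
  have hAg : A (X i ^ m + rename (↑) c) = Polynomial.X ^ m + Polynomial.C c := by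
    rw [map_add, map_pow, hAX, hAc]
  refine (MulEquiv.irreducible_iff A.toMulEquiv).1 ?_
  rw [show A.toMulEquiv _ = A _ from rfl, hAg]
  exact irreducible_X_pow_add_C_of_isHomogeneous hm
    ((IsHomogeneous.rename_isHomogeneous_iff Subtype.val_injective).1 hc)
    (fun h => hc0 (by rw [h, map_zero])) hmn

theorem irreducible_X_pow_add_X_pow_add_X_pow_mul_X_pow_add_sum_X_pow {x y z : σ}
    {W : Finset σ} {m n a b : ℕ} (hxy : x ≠ y) (hzy : z ≠ y) (hzx : z ≠ x) (hxW : x ∉ W)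
    (hyW : y ∉ W) (hm : 0 < m) (hb : 0 < b) (hab : a + b = n) (hmn : m.Coprime n) :
    Irreducible
      (X x ^ n + X y ^ m + X x ^ a * X z ^ b + ∑ j ∈ W, X j ^ n : MvPolynomial σ k) := by
  classical
  set c : MvPolynomial σ k := X x ^ n + X x ^ a * X z ^ b + ∑ j ∈ W, X j ^ n
  have hci : c ∈ supported k {y}ᶜ :=
    add_mem (add_mem (pow_mem (X_mem_supported.2 hxy) _)
      (mul_mem (pow_mem (X_mem_supported.2 hxy) _) (pow_mem (X_mem_supported.2 hzy) _)))
      (sum_mem fun j hj => pow_mem (X_mem_supported.2 (ne_of_mem_of_not_mem hj hyW)) _)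
  have hc : c.IsHomogeneous n :=
    ((isHomogeneous_X_pow x n).add
      (hab ▸ (isHomogeneous_X_pow x a).mul (isHomogeneous_X_pow z b))).add
      (IsHomogeneous.sum _ _ _ fun j _ => isHomogeneous_X_pow j n)
  have hc0 : c ≠ 0 := by
    have hW : ∀ j ∈ W, (Pi.single x 1 : σ → k) j ^ n = 0 := fun j hj => by
      rw [Pi.single_eq_of_ne (ne_of_mem_of_not_mem hj hxW), zero_pow (by omega)]
    have heval : eval (Pi.single x 1) c = 1 := by
      simp [c, hzx, zero_pow hb.ne', Finset.sum_eq_zero hW]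
    rintro hc0
    simp [hc0] at heval
  have hg : X x ^ n + X y ^ m + X x ^ a * X z ^ b + ∑ j ∈ W, X j ^ n = X y ^ m + c := by
    simp only [c]
    ring
  exact hg ▸ irreducible_X_pow_add_of_mem_supported y hm hci hc hc0 hmn

end MvPolynomial

theorem stmt_5_general (k : Type*) [Field k] (d m n a b : ℕ)
    (hd : 2 ≤ d) (hm : 2 ≤ m) (hgcd : Nat.gcd m n = 1)
    (hb : 1 ≤ b) (hab : a + b = n) :
    Irreducible ((X 0 : MvPolynomial (Fin (d + 1)) k) ^ n + (X 1) ^ m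
      + (X 0) ^ a * (X 2) ^ b
      + ∑ j ∈ Finset.univ.filter (fun j : Fin (d + 1) => 3 ≤ (j : ℕ)), (X j) ^ n) := by
  have hv1 : ((1 : Fin (d + 1)) : ℕ) = 1 := by simp; omega
  have hv2 : ((2 : Fin (d + 1)) : ℕ) = 2 := by simp; omega
  exact irreducible_X_pow_add_X_pow_add_X_pow_mul_X_pow_add_sum_X_pow
    (Fin.ne_of_val_ne (by rw [Fin.val_zero, hv1]; omega)) (Fin.ne_of_val_ne (by omega))
    (Fin.ne_of_val_ne (by rw [Fin.val_zero]; omega)) (by simp)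
    (by rw [Finset.mem_filter, hv1]; simp)
    (by omega) (by omega) hab hgcd

/-- Let `k` be an algebraically closed field, `d ≥ 2`, and `m, n ≥ 2` integers with
`gcd(m,n) = 1` such that `m·n` is invertible in `k`, and `a, b ≥ 1` with `a + b = n`.
Then `g = X^n + Y^m + X^a Z^b + W_3^n + ⋯ + W_d^n` is irreducible in
`k[X, Y, Z, W_3, …, W_d]` (the variables `X, Y, Z, W_3, …, W_d` are indexed by
`0, 1, 2, 3, …, d` in `Fin (d+1)`; when `d = 2` the sum over the `W_j` is empty). -/
theorem stmt_5 (k : Type*) [Field k] [IsAlgClosed k] (d m n a b : ℕ)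
    (hd : 2 ≤ d) (hm : 2 ≤ m) (hn : 2 ≤ n) (hgcd : Nat.gcd m n = 1)
    (hchar : ((m * n : ℕ) : k) ≠ 0) (ha : 1 ≤ a) (hb : 1 ≤ b) (hab : a + b = n) :
    Irreducible ((X 0 : MvPolynomial (Fin (d + 1)) k) ^ n + (X 1) ^ m
      + (X 0) ^ a * (X 2) ^ b
      + ∑ j ∈ Finset.univ.filter (fun j : Fin (d + 1) => 3 ≤ (j : ℕ)), (X j) ^ n) :=
  stmt_5_general k d m n a b hd hm hgcd hb hab
end

section
/- Let S be a Noetherian commutative ring of Krull dimension d ≥ 1, and let T = S[X, X^{−1}] be the Laurent polynomial ring over S, graded by assigning degree i to monomials a X^i with a ∈ S, i ∈ ℤ. If 𝔪 is a homogeneous prime ideal of T of height d, then 𝔪 ∩ S is a maximal ideal of S. -/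
/-!
Since every `X^i` is a unit, a homogeneous ideal `𝔪` of `S[X, X⁻¹]` contains the coefficients of
its elements, so it is extended from `𝔭 = 𝔪 ∩ S`. Its fibre over `𝔭` is then the zero ideal, and
the dimension inequality `ht 𝔪 ≤ ht 𝔭 + ht (𝔪 / 𝔭T)` gives `d = ht 𝔪 ≤ ht 𝔭 ≤ dim S = d`.
A prime whose height is the (finite) Krull dimension is maximal.
-/

open LaurentPolynomial

namespace LaurentPolynomial

instance {R : Type*} [CommRing R] [IsNoetherianRing R] : IsNoetherianRing R[T;T⁻¹] :=
  IsLocalization.isNoetherianRing (.powers (Polynomial.X : Polynomial R)) _ inferInstance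

theorem map_comap_C_of_C_coeff_mul_T_mem {R : Type*} [CommSemiring R] {I : Ideal R[T;T⁻¹]}
    (hI : ∀ f ∈ I, ∀ i : ℤ, C (f.coeff i) * T i ∈ I) : (I.comap C).map C = I := by
  refine le_antisymm Ideal.map_comap_le fun f hf ↦ ?_
  rw [← AddMonoidAlgebra.sum_coeff_single f]
  refine Ideal.sum_mem _ fun i _ ↦ ?_
  rw [single_eq_C_mul_T]
  exact Ideal.mul_mem_right _ _ <| Ideal.mem_map_of_mem _ <|
    (Ideal.mul_unit_mem_iff_mem I (isUnit_T i)).mp (hI f hf i)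

end LaurentPolynomial

theorem Ideal.height_le_of_liesOver_of_le_map {R A : Type*} [CommRing R] [IsNoetherianRing R]
    [CommRing A] [IsNoetherianRing A] [Algebra R A] (p : Ideal R) [p.IsPrime] (P : Ideal A)
    [P.IsPrime] [P.LiesOver p] (hP : P ≤ p.map (algebraMap R A)) : P.height ≤ p.height := by
  have hpP : p.map (algebraMap R A) ≤ P :=
    Ideal.map_le_iff_le_comap.mpr (Ideal.LiesOver.over (P := P) (p := p)).le
  have : Nontrivial (A ⧸ p.map (algebraMap R A)) :=
    Ideal.Quotient.nontrivial_iff.mpr (ne_top_of_le_ne_top Ideal.IsPrime.ne_top' hpP)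
  have hbot : P.map (Ideal.Quotient.mk (p.map (algebraMap R A))) = ⊥ := by
    rw [Ideal.map_eq_bot_iff_le_ker, Ideal.mk_ker]; exact hP
  simpa [hbot, Ideal.height_bot] using Ideal.height_le_height_add_of_liesOver p P

theorem stmt_9_general (S : Type*) [CommRing S] [IsNoetherianRing S] (d : ℕ)
    (hdim : ringKrullDim S = d)
    (𝔪 : Ideal (LaurentPolynomial S)) (h𝔪 : 𝔪.IsPrime)
    (hhom : ∀ f ∈ 𝔪, ∀ i : ℤ, LaurentPolynomial.C (f.coeff i) * T i ∈ 𝔪)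
    (hht : Order.height (⟨𝔪, h𝔪⟩ : PrimeSpectrum (LaurentPolynomial S)) = (d : ℕ∞)) :
    (𝔪.comap (LaurentPolynomial.C : S →+* LaurentPolynomial S)).IsMaximal := by
  set 𝔭 := 𝔪.comap (C : S →+* S[T;T⁻¹])
  have : FiniteRingKrullDim S := finiteRingKrullDim_iff_ne_bot_and_top.mpr
    (hdim ▸ ⟨WithBot.natCast_ne_bot d, (WithBot.coe_lt_coe.mpr (ENat.natCast_lt_top d)).ne⟩)
  have : 𝔪.LiesOver 𝔭 := ⟨rfl⟩
  have h𝔪_le_𝔭 : 𝔪.height ≤ 𝔭.height :=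
    Ideal.height_le_of_liesOver_of_le_map 𝔭 𝔪 (map_comap_C_of_C_coeff_mul_T_mem hhom).ge
  refine Ideal.isMaximal_of_height_eq_ringKrullDim
    (le_antisymm Ideal.height_le_ringKrullDim_of_isPrime ?_)
  have hd : (d : ℕ∞) ≤ 𝔭.height := hht ▸ PrimeSpectrum.height_eq_orderHeight ⟨𝔪, h𝔪⟩ ▸ h𝔪_le_𝔭
  rw [hdim]
  exact_mod_cast hd

/-- Let `S` be a Noetherian commutative ring of Krull dimension `d ≥ 1` and
`T = S[X, X⁻¹]` the Laurent polynomial ring, ℤ-graded with `deg X = 1`. If `𝔪` is a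
homogeneous prime ideal of `T` of height `d`, then `𝔪 ∩ S` is a maximal ideal of `S`. -/
theorem stmt_9 (S : Type*) [CommRing S] [IsNoetherianRing S] (d : ℕ) (hd : 1 ≤ d)
    (hdim : ringKrullDim S = d)
    (𝔪 : Ideal (LaurentPolynomial S)) (h𝔪 : 𝔪.IsPrime)
    (hhom : ∀ f ∈ 𝔪, ∀ i : ℤ, LaurentPolynomial.C (f.coeff i) * T i ∈ 𝔪)
    (hht : Order.height (⟨𝔪, h𝔪⟩ : PrimeSpectrum (LaurentPolynomial S)) = (d : ℕ∞)) :
    (𝔪.comap (LaurentPolynomial.C : S →+* LaurentPolynomial S)).IsMaximal :=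
  stmt_9_general S d hdim 𝔪 h𝔪 hhom hht
end

section
/- Let R ⊆ A be an extension of Noetherian commutative integral domains such that A is integral over R, and let ξ ∈ R be nonzero. If A has exactly one prime ideal of height one containing ξ, then R has exactly one prime ideal of height one containing ξ. -/
/-! Every height-one prime `p` of `R` containing `ξ` lies under a prime `q` of `A`
(lying over), and incomparability makes contraction strictly monotone on spectra, so
`ht q ≤ ht p = 1`; as `q ≠ 0`, `q` has height one and contains `ξ`, hence is the unique
such prime `Q` of `A`, and `p = Q ∩ R`. Such a `p` exists: `ξ` is not a unit since it lies
in `Q`, and by Krull's principal ideal theorem any prime minimal over `ξ R` has height one. -/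

open Ideal

section IntegralExtension

variable {R A : Type*} [CommRing R] [CommRing A] [Algebra R A] [Algebra.IsIntegral R A]

theorem PrimeSpectrum.comap_strictMono_of_isIntegral :
    StrictMono (PrimeSpectrum.comap (algebraMap R A)) := fun _ _ h =>
  Ideal.IsIntegral.comap_lt_comap (R := R) h

theorem PrimeSpectrum.height_le_height_comap_of_isIntegral (q : PrimeSpectrum A) :
    Order.height q ≤ Order.height (PrimeSpectrum.comap (algebraMap R A) q) :=
  Order.height_le_height_apply_of_strictMono _ comap_strictMono_of_isIntegral q

end IntegralExtension

theorem PrimeSpectrum.height_eq_one_of_ne_bot {B : Type*} [CommRing B] [IsDomain B]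
    {p : PrimeSpectrum B} (hp : p ≠ ⊥) (h : Order.height p ≤ 1) : Order.height p = 1 :=
  le_antisymm h <| Order.one_le_iff_ne_zero.mpr <| by
    simpa only [ne_eq, Order.height_eq_zero, isMin_iff_eq_bot] using hp

theorem PrimeSpectrum.height_eq_one_of_mem_minimalPrimes_span_singleton {B : Type*}
    [CommRing B] [IsDomain B] [IsNoetherianRing B] {x : B} (hx : x ≠ 0) {p : PrimeSpectrum B}
    (hp : p.asIdeal ∈ (span {x}).minimalPrimes) : Order.height p = 1 := by
  refine height_eq_one_of_ne_bot (fun h => hx ?_) ?_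
  · simpa [h] using hp.le (mem_span_singleton_self x)
  · rw [← PrimeSpectrum.height_eq_orderHeight]
    exact height_le_one_of_isPrincipal_of_mem_minimalPrimes _ _ hp

theorem PrimeSpectrum.exists_height_eq_one_comap_eq {R A : Type*} [CommRing R] [CommRing A]
    [IsDomain R] [IsDomain A] [Algebra R A] [Algebra.IsIntegral R A]
    (hinj : Function.Injective (algebraMap R A)) {p : PrimeSpectrum R}
    (hp : Order.height p = 1) :
    ∃ q : PrimeSpectrum A, Order.height q = 1 ∧ PrimeSpectrum.comap (algebraMap R A) q = p := by
  obtain ⟨q, rfl⟩ := RingHom.IsIntegral.comap_surjective Algebra.IsIntegral.isIntegral hinj p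
  refine ⟨q, height_eq_one_of_ne_bot ?_ (hp ▸ height_le_height_comap_of_isIntegral q), rfl⟩
  rintro rfl
  have hbot : PrimeSpectrum.comap (algebraMap R A) ⊥ = ⊥ :=
    PrimeSpectrum.ext (comap_bot_of_injective _ hinj)
  simp [hbot] at hp

theorem stmt_10_general (R A : Type*) [CommRing R] [CommRing A] [IsDomain R] [IsDomain A]
    [IsNoetherianRing R] [Algebra R A]
    (hinj : Function.Injective (algebraMap R A)) [Algebra.IsIntegral R A]
    (ξ : R) (hξ : ξ ≠ 0)
    (hA : ∃! Q : PrimeSpectrum A, Order.height Q = 1 ∧ algebraMap R A ξ ∈ Q.asIdeal) :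
    ∃! P : PrimeSpectrum R, Order.height P = 1 ∧ ξ ∈ P.asIdeal := by
  obtain ⟨Q, ⟨-, hξQ⟩, hQ⟩ := hA
  have eq_comap_Q (p : PrimeSpectrum R) (hp : Order.height p = 1) (hξp : ξ ∈ p.asIdeal) :
      p = PrimeSpectrum.comap (algebraMap R A) Q := by
    obtain ⟨q, hq, rfl⟩ := PrimeSpectrum.exists_height_eq_one_comap_eq hinj hp
    rw [hQ q ⟨hq, hξp⟩]
  have hξ_span : span {ξ} ≠ ⊤ :=
    ne_top_of_le_ne_top (PrimeSpectrum.comap (algebraMap R A) Q).isPrime.ne_top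
      ((span_singleton_le_iff_mem _).mpr hξQ)
  obtain ⟨p, hp⟩ := nonempty_minimalPrimes hξ_span
  have hp1 : Order.height (⟨p, hp.isPrime⟩ : PrimeSpectrum R) = 1 :=
    PrimeSpectrum.height_eq_one_of_mem_minimalPrimes_span_singleton hξ hp
  have hξp : ξ ∈ p := hp.le (mem_span_singleton_self ξ)
  exact ⟨⟨p, hp.isPrime⟩, ⟨hp1, hξp⟩,
    fun p' hp' => (eq_comap_Q p' hp'.1 hp'.2).trans (eq_comap_Q _ hp1 hξp).symm⟩

/-- Let `R ⊆ A` be an extension of Noetherian commutative integral domains with `A`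
integral over `R`, and let `ξ ∈ R` be nonzero. If `A` has exactly one height-one prime
containing `ξ`, then `R` has exactly one height-one prime containing `ξ`. -/
theorem stmt_10 (R A : Type*) [CommRing R] [CommRing A] [IsDomain R] [IsDomain A]
    [IsNoetherianRing R] [IsNoetherianRing A] [Algebra R A]
    (hinj : Function.Injective (algebraMap R A)) [Algebra.IsIntegral R A]
    (ξ : R) (hξ : ξ ≠ 0)
    (hA : ∃! Q : PrimeSpectrum A, Order.height Q = 1 ∧ algebraMap R A ξ ∈ Q.asIdeal) :
    ∃! P : PrimeSpectrum R, Order.height P = 1 ∧ ξ ∈ P.asIdeal :=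
  stmt_10_general R A hinj ξ hξ hA
end

section
/- Let k be a field, let T = k[X_1, …, X_d] be a polynomial ring in d variables, and let A be a commutative ring containing T that is finite and free as a T-module. Let R be any intermediate ring T ⊆ R ⊆ A, and let u_1, …, u_g ∈ T be a T-regular sequence. If the ideal (u_1, …, u_g)A of A has exactly one minimal prime, then the ideal (u_1, …, u_g)R of R has exactly one minimal prime. -/
/-!
`A` is finite, hence integral, over `T`, so also over the intermediate ring `R`. By lying over,
every minimal prime of an ideal `I` of `R` is the contraction of a minimal prime of `IA`;
hence if `IA` has a unique minimal prime `Q`, then `Q ∩ R` is the unique minimal prime of `I`.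
-/

namespace Ideal

variable {R A : Type*} [CommRing R] [CommRing A] [Algebra R A] [Algebra.IsIntegral R A]

theorem minimalPrimes_subset_comap_minimalPrimes_map
    (hinj : Function.Injective (algebraMap R A)) (I : Ideal R) :
    I.minimalPrimes ⊆ comap (algebraMap R A) '' (I.map (algebraMap R A)).minimalPrimes := by
  rintro P ⟨⟨hP, hIP⟩, hPmin⟩
  have hker : (⊥ : Ideal A).comap (algebraMap R A) ≤ P := by
    rw [← RingHom.ker_eq_comap_bot, (RingHom.injective_iff_ker_eq_bot _).mp hinj]
    exact bot_le
  obtain ⟨Q, -, hQ, hQP⟩ := exists_ideal_over_prime_of_isIntegral P ⊥ hker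
  have hIQ : I.map (algebraMap R A) ≤ Q := map_le_iff_le_comap.mpr (hQP ▸ hIP)
  obtain ⟨Q₀, hQ₀, hQ₀Q⟩ := exists_minimalPrimes_le hIQ
  have hcomap_le : Q₀.comap (algebraMap R A) ≤ P := hQP ▸ comap_mono hQ₀Q
  have hI_le : I ≤ Q₀.comap (algebraMap R A) := map_le_iff_le_comap.mp hQ₀.1.2
  exact ⟨Q₀, hQ₀, le_antisymm hcomap_le (hPmin ⟨hQ₀.1.1.comap _, hI_le⟩ hcomap_le)⟩

theorem existsUnique_mem_minimalPrimes_of_map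
    (hinj : Function.Injective (algebraMap R A)) {I : Ideal R}
    (h : ∃! Q, Q ∈ (I.map (algebraMap R A)).minimalPrimes) :
    ∃! P, P ∈ I.minimalPrimes := by
  obtain ⟨Q, hQ, hQuniq⟩ := h
  have hsub : ∀ P ∈ I.minimalPrimes, P = Q.comap (algebraMap R A) := by
    intro P hP
    obtain ⟨Q', hQ', rfl⟩ := minimalPrimes_subset_comap_minimalPrimes_map hinj I hP
    rw [hQuniq Q' hQ']
  have hI : I ≠ ⊤ := fun hI ↦
    (hQ.1.1.comap (algebraMap R A)).ne_top (top_le_iff.mp (hI ▸ map_le_iff_le_comap.mp hQ.1.2))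
  obtain ⟨P, hP⟩ := nonempty_minimalPrimes hI
  exact ⟨P, hP, fun P' hP' ↦ (hsub P' hP').trans (hsub P hP).symm⟩

end Ideal

theorem stmt_13_general (k : Type*) [Field k] (d : ℕ) (A : Type*) [CommRing A]
    [Algebra (MvPolynomial (Fin d) k) A]
    [Module.Finite (MvPolynomial (Fin d) k) A]
    (R : Subalgebra (MvPolynomial (Fin d) k) A)
    (us : List (MvPolynomial (Fin d) k))
    (hA : ∃! Q : Ideal A, Q ∈ (Ideal.span
      ((algebraMap (MvPolynomial (Fin d) k) A) '' {x | x ∈ us})).minimalPrimes) :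
    ∃! P : Ideal R, P ∈ (Ideal.span
      ((algebraMap (MvPolynomial (Fin d) k) R) '' {x | x ∈ us})).minimalPrimes := by
  have : Algebra.IsIntegral R A :=
    Algebra.IsIntegral.tower_top (R := MvPolynomial (Fin d) k)
  refine Ideal.existsUnique_mem_minimalPrimes_of_map (A := A) Subtype.val_injective ?_
  rwa [Ideal.map_span, ← Set.image_comp, ← RingHom.coe_comp, ← IsScalarTower.algebraMap_eq]

/-- Let `k` be a field, `T = k[X_1, …, X_d]`, and `A` a commutative ring containing `T`
which is finite free as a `T`-module. Let `R` be any intermediate ring `T ⊆ R ⊆ A`, and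
let `u_1, …, u_g ∈ T` be a `T`-regular sequence. If the ideal `(u_1, …, u_g)A` has exactly
one minimal prime, then the ideal `(u_1, …, u_g)R` has exactly one minimal prime. -/
theorem stmt_13 (k : Type*) [Field k] (d : ℕ) (A : Type*) [CommRing A]
    [Algebra (MvPolynomial (Fin d) k) A]
    (hinj : Function.Injective (algebraMap (MvPolynomial (Fin d) k) A))
    [Module.Finite (MvPolynomial (Fin d) k) A] [Module.Free (MvPolynomial (Fin d) k) A]
    (R : Subalgebra (MvPolynomial (Fin d) k) A)
    (us : List (MvPolynomial (Fin d) k))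
    (hreg : RingTheory.Sequence.IsRegular (MvPolynomial (Fin d) k) us)
    (hA : ∃! Q : Ideal A, Q ∈ (Ideal.span
      ((algebraMap (MvPolynomial (Fin d) k) A) '' {x | x ∈ us})).minimalPrimes) :
    ∃! P : Ideal R, P ∈ (Ideal.span
      ((algebraMap (MvPolynomial (Fin d) k) R) '' {x | x ∈ us})).minimalPrimes :=
  stmt_13_general k d A R us hA
end

section
/- Let k be an algebraically closed field and let m, n ≥ 2 be integers with gcd(m, n) = 1 such that mn is invertible in k (i.e., the image of m·n in k is nonzero). Let (a, b) ∈ k² be a nonzero pair. Then the quotient ring k[X, Y, Z]/(X^n + Y^m + Z^n, aX + bZ) has exactly one minimal prime ideal. -/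
/-!
Parametrizing the plane `a X₀ + b X₂ = 0` by `(b t, y, -a t)` identifies the quotient with
`k[t, y] ⧸ (d tⁿ + yᵐ)`, where `d = bⁿ + (-a)ⁿ`. If `d = 0` the radical is `(y)`, which is prime.
Otherwise `d tⁿ + yᵐ` is prime: one of `m, n` is odd, say `N`, with `M` the other, and
`Y^N + c t^M` is irreducible over `k(t)` by Kummer's criterion for odd exponents, because
comparing `t`-degrees shows that `c t^M` has no `p`-th root for a prime `p ∣ N`; Gauss's lemma
brings this back to `k[t][Y]`. In either case the ideal has prime radical, which is then the
unique minimal prime of the quotient.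
-/

open MvPolynomial

theorem Ideal.existsUnique_mem_minimalPrimes_quotient {R : Type*} [CommRing R] {I : Ideal R}
    (hI : I.radical.IsPrime) : ∃! P : Ideal (R ⧸ I), P ∈ minimalPrimes (R ⧸ I) := by
  have hmin : I.minimalPrimes = {I.radical} := by
    rw [← Ideal.radical_minimalPrimes, Ideal.minimalPrimes_eq_subsingleton_self]
  rw [Ideal.minimalPrimes_eq_comap] at hmin
  obtain ⟨P, hP, -⟩ := hmin.symm.subset rfl
  refine ⟨P, hP, fun Q hQ => Ideal.comap_injective_of_surjective _ Ideal.Quotient.mk_surjective ?_⟩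
  exact (hmin.subset ⟨Q, hQ, rfl⟩).trans (hmin.subset ⟨P, hP, rfl⟩).symm

theorem Ideal.isPrime_radical_of_surjective_of_ker_le {R S F : Type*} [CommRing R] [CommRing S]
    [FunLike F R S] [RingHomClass F R S] {I : Ideal R} (φ : F) (hφ : Function.Surjective φ)
    (hker : RingHom.ker φ ≤ I) (hI : (I.map φ).radical.IsPrime) : I.radical.IsPrime := by
  have hcomap : I.radical = (I.map φ).radical.comap φ := by
    rw [Ideal.comap_radical, Ideal.comap_map_of_surjective' φ hφ, sup_eq_left.mpr hker]
  rw [hcomap]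
  exact Ideal.comap_isPrime φ _

section
open Polynomial Polynomial.Bivariate

theorem Polynomial.pow_ne_algebraMap_of_not_dvd_natDegree {k K : Type*} [Field k] [Field K]
    [Algebra k[X] K] [IsFractionRing k[X] K] {p : ℕ} (hp : 0 < p) {q : k[X]}
    (hq : ¬ p ∣ q.natDegree) (b : K) : b ^ p ≠ algebraMap k[X] K q := by
  intro hb
  obtain ⟨r, rfl⟩ : ∃ r, algebraMap k[X] K r = b :=
    IsIntegrallyClosed.isIntegral_iff.mp
      (IsIntegral.of_pow hp (hb ▸ isIntegral_algebraMap))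
  rw [← map_pow, (IsFractionRing.injective k[X] K).eq_iff] at hb
  exact hq ⟨r.natDegree, by rw [← hb, natDegree_pow, mul_comm]⟩

theorem Polynomial.prime_X_pow_add_C_of_coprime_natDegree {k : Type*} [Field k] {N : ℕ}
    (hN : Odd N) {q : k[X]} (hq : N.Coprime q.natDegree) : Prime (X ^ N + C q : k[X][Y]) := by
  have hmonic : (X ^ N + C q : k[X][Y]).Monic :=
    monic_X_pow_add (degree_C_le.trans_lt (by exact_mod_cast hN.pos))
  rw [← UniqueFactorizationMonoid.irreducible_iff_prime,
    hmonic.irreducible_iff_irreducible_map_fraction_map (K := FractionRing k[X])]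
  have hmap : (X ^ N + C q : k[X][Y]).map (algebraMap k[X] (FractionRing k[X])) =
      X ^ N - C (algebraMap k[X] (FractionRing k[X]) (-q)) := by
    simp [sub_eq_add_neg]
  rw [hmap]
  refine X_pow_sub_C_irreducible_of_odd hN fun p hp hpN => ?_
  refine pow_ne_algebraMap_of_not_dvd_natDegree hp.pos ?_
  rw [natDegree_neg]
  exact fun hpq => hp.one_lt.ne' (Nat.eq_one_of_dvd_coprimes hq hpN hpq)


theorem Polynomial.prime_C_mul_C_X_pow_add_X_pow {k : Type*} [Field k] {m n : ℕ}
    (hmn : m.Coprime n) {d : k} (hd : d ≠ 0) :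
    Prime (C (C d) * C X ^ n + X ^ m : k[X][Y]) := by
  rcases Nat.even_or_odd m with hm | hm
  · have hn : Odd n := (Nat.Coprime.coprime_dvd_left hm.two_dvd hmn).odd_of_left
    have hswap : Bivariate.swap (C (C d) * C X ^ n + X ^ m : k[X][Y]) =
        C (C d) * (X ^ n + C (C d⁻¹ * X ^ m)) := by
      rw [map_add, map_mul, map_pow, map_pow, Bivariate.swap_C_C, Bivariate.swap_X,
        Bivariate.swap_Y, mul_add, ← C_mul, ← mul_assoc, ← C_mul, mul_inv_cancel₀ hd, C_1,
        one_mul, C_pow]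
    rw [← MulEquiv.prime_iff (Bivariate.swap : k[X][Y] ≃ₐ[k] k[X][Y]), hswap,
      (associated_unit_mul_left _ _ ((hd.isUnit.map C).map C)).prime_iff]
    refine prime_X_pow_add_C_of_coprime_natDegree hn ?_
    rwa [natDegree_C_mul_X_pow _ _ (inv_ne_zero hd), Nat.coprime_comm]
  · rw [add_comm, ← C_pow, ← C_mul]
    refine prime_X_pow_add_C_of_coprime_natDegree hm ?_
    rwa [natDegree_C_mul_X_pow _ _ hd]

theorem Polynomial.isPrime_radical_span_C_mul_C_X_pow_add_X_pow {k : Type*} [Field k]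
    {m n : ℕ} (hm : m ≠ 0) (hmn : m.Coprime n) (d : k) :
    (Ideal.span {C (C d) * C X ^ n + X ^ m} : Ideal k[X][Y]).radical.IsPrime := by
  rcases eq_or_ne d 0 with rfl | hd
  · have hX : (Ideal.span {X} : Ideal k[X][Y]).IsPrime :=
      (Ideal.span_singleton_prime X_ne_zero).mpr prime_X
    rw [map_zero, map_zero, zero_mul, zero_add, ← Ideal.span_singleton_pow,
      Ideal.radical_pow _ hm, hX.radical]
    exact hX
  · have hE := (Ideal.span_singleton_prime (prime_C_mul_C_X_pow_add_X_pow hmn hd).ne_zero).mpr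
      (prime_C_mul_C_X_pow_add_X_pow hmn hd)
    rw [hE.radical]
    exact hE

end

section Plane
open Polynomial.Bivariate

variable {k : Type*} [Field k]

/-- Restriction to the plane `a X₀ + b X₂ = 0`, parametrized by `(b t, y, -a t)` with `t` the
inner and `y` the outer variable of `k[X][Y]`. -/
noncomputable def planeRestriction (a b : k) : MvPolynomial (Fin 3) k →ₐ[k] k[X][Y] :=
  aeval ![Polynomial.C (Polynomial.C b * Polynomial.X), Y,
    Polynomial.C (Polynomial.C (-a) * Polynomial.X)]

noncomputable def planeLift (α β : k) : k[X][Y] →+* MvPolynomial (Fin 3) k :=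
  Polynomial.eval₂RingHom (Polynomial.eval₂RingHom C (C α * X 0 + C β * X 2)) (X 1)

theorem planeRestriction_linear (a b : k) : planeRestriction a b (C a * X 0 + C b * X 2) = 0 := by
  simp only [planeRestriction, map_add, map_mul, aeval_C, aeval_X, Polynomial.algebraMap_apply,
    Polynomial.algebraMap_eq, map_neg, Matrix.cons_val_zero, Matrix.cons_val]
  ring

theorem planeRestriction_planeLift {a b α β : k} (h : α * b - β * a = 1)
    (p : k[X][Y]) : planeRestriction a b (planeLift α β p) = p := by
  suffices hid : (planeRestriction a b : _ →+* _).comp (planeLift α β) = RingHom.id _ from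
    RingHom.congr_fun hid p
  refine Polynomial.ringHom_ext' (Polynomial.ringHom_ext' ?_ ?_) ?_
  · ext r
    simp [planeLift, planeRestriction, Polynomial.algebraMap_apply]
  · simp only [planeRestriction, planeLift, map_mul, map_neg, RingHom.coe_comp, RingHom.coe_coe,
      Polynomial.coe_eval₂RingHom, Function.comp_apply, Polynomial.eval₂_C, Polynomial.eval₂_X,
      map_add, algHom_C, Polynomial.algebraMap_apply, Polynomial.algebraMap_eq, aeval_X,
      Matrix.cons_val_zero, Matrix.cons_val]
    have hC := congrArg (fun r : k => (Polynomial.C (Polynomial.C r) : k[X][Y])) h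
    simp only [map_sub, map_mul, map_one] at hC
    linear_combination Polynomial.C Polynomial.X * hC
  · simp [planeLift, planeRestriction]

theorem planeLift_planeRestriction_sub_mem {a b α β : k} (h : α * b - β * a = 1)
    (x : MvPolynomial (Fin 3) k) :
    planeLift α β (planeRestriction a b x) - x ∈ Ideal.span {C a * X 0 + C b * X 2} := by
  have hC : C α * C b - C β * C a = (1 : MvPolynomial (Fin 3) k) := by
    rw [← map_mul, ← map_mul, ← map_sub, h, map_one]
  rw [← Ideal.Quotient.eq]
  refine RingHom.congr_fun (MvPolynomial.ringHom_ext (fun r => ?_) (fun i => ?_) :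
    (Ideal.Quotient.mk _).comp ((planeLift α β).comp (planeRestriction a b : _ →+* _)) =
      Ideal.Quotient.mk _) x
  · simp [planeLift, planeRestriction, Polynomial.algebraMap_apply]
  · rw [RingHom.comp_apply, RingHom.comp_apply, Ideal.Quotient.eq, Ideal.mem_span_singleton']
    fin_cases i
    all_goals simp only [planeLift, planeRestriction, Fin.zero_eta, Fin.reduceFinMk, RingHom.coe_coe,
      aeval_X, Matrix.cons_val, Matrix.cons_val_zero, Polynomial.coe_eval₂RingHom,
      Polynomial.eval₂_mul, Polynomial.eval₂_C, Polynomial.eval₂_X, map_mul, map_neg,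
      Polynomial.eval₂_neg]
    · exact ⟨C β, by linear_combination -X 0 * hC⟩
    · exact ⟨0, by simp⟩
    · exact ⟨-C α, by linear_combination -X 2 * hC⟩

theorem exists_mul_sub_mul_eq_one {a b : k} (hab : (a, b) ≠ (0, 0)) :
    ∃ α β : k, α * b - β * a = 1 := by
  rcases eq_or_ne b 0 with rfl | hb
  · have ha : a ≠ 0 := fun ha => hab (by rw [ha])
    exact ⟨0, -a⁻¹, by simp [ha]⟩
  · exact ⟨b⁻¹, 0, by simp [hb]⟩

theorem planeRestriction_surjective {a b : k} (hab : (a, b) ≠ (0, 0)) :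
    Function.Surjective (planeRestriction a b) := by
  obtain ⟨α, β, h⟩ := exists_mul_sub_mul_eq_one hab
  exact fun p => ⟨planeLift α β p, planeRestriction_planeLift h p⟩

theorem ker_planeRestriction {a b : k} (hab : (a, b) ≠ (0, 0)) :
    RingHom.ker (planeRestriction a b) = Ideal.span {C a * X 0 + C b * X 2} := by
  obtain ⟨α, β, h⟩ := exists_mul_sub_mul_eq_one hab
  refine le_antisymm (fun x hx => ?_)
    ((Ideal.span_singleton_le_iff_mem _).mpr (planeRestriction_linear a b))
  have hx' := planeLift_planeRestriction_sub_mem h x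
  rwa [RingHom.mem_ker.mp hx, map_zero, zero_sub, neg_mem_iff] at hx'

theorem planeRestriction_X_pow_add_X_pow_add_X_pow (a b : k) (m n : ℕ) :
    planeRestriction a b (X 0 ^ n + X 1 ^ m + X 2 ^ n) =
      Polynomial.C (Polynomial.C (b ^ n + (-a) ^ n)) * Polynomial.C Polynomial.X ^ n +
        Y ^ m := by
  simp only [planeRestriction, map_add, map_pow, aeval_X, Matrix.cons_val_zero,
    Matrix.cons_val_one, Matrix.cons_val, map_mul, map_neg, mul_pow]
  ring

end Plane

theorem stmt_14_general (k : Type*) [Field k] (m n : ℕ)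
    (hm : 2 ≤ m) (hgcd : Nat.gcd m n = 1)
    (a b : k) (hab : (a, b) ≠ (0, 0)) :
    ∃! P : Ideal (MvPolynomial (Fin 3) k ⧸
        Ideal.span {(X 0 : MvPolynomial (Fin 3) k) ^ n + (X 1) ^ m + (X 2) ^ n,
          C a * X 0 + C b * X 2}),
      P ∈ minimalPrimes (MvPolynomial (Fin 3) k ⧸
        Ideal.span {(X 0 : MvPolynomial (Fin 3) k) ^ n + (X 1) ^ m + (X 2) ^ n,
          C a * X 0 + C b * X 2}) := by
  apply Ideal.existsUnique_mem_minimalPrimes_quotient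
  refine Ideal.isPrime_radical_of_surjective_of_ker_le _ (planeRestriction_surjective hab) ?_ ?_
  · rw [ker_planeRestriction hab]
    exact Ideal.span_mono (Set.singleton_subset_iff.mpr (Set.mem_insert_of_mem _ rfl))
  · rw [Ideal.map_span, Set.image_pair, planeRestriction_X_pow_add_X_pow_add_X_pow,
      planeRestriction_linear, Ideal.span_pair_zero]
    exact Polynomial.isPrime_radical_span_C_mul_C_X_pow_add_X_pow (by omega) hgcd _

/-- Let `k` be an algebraically closed field and `m, n ≥ 2` integers with `gcd(m,n) = 1`
such that `m·n` is invertible in `k`. Let `(a, b) ∈ k²` be a nonzero pair. Then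
`k[X, Y, Z]/(X^n + Y^m + Z^n, aX + bZ)` has exactly one minimal prime ideal
(variables `X, Y, Z` are indexed by `0, 1, 2`). -/
theorem stmt_14 (k : Type*) [Field k] [IsAlgClosed k] (m n : ℕ)
    (hm : 2 ≤ m) (hn : 2 ≤ n) (hgcd : Nat.gcd m n = 1)
    (hchar : ((m * n : ℕ) : k) ≠ 0) (a b : k) (hab : (a, b) ≠ (0, 0)) :
    ∃! P : Ideal (MvPolynomial (Fin 3) k ⧸
        Ideal.span {(X 0 : MvPolynomial (Fin 3) k) ^ n + (X 1) ^ m + (X 2) ^ n,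
          C a * X 0 + C b * X 2}),
      P ∈ minimalPrimes (MvPolynomial (Fin 3) k ⧸
        Ideal.span {(X 0 : MvPolynomial (Fin 3) k) ^ n + (X 1) ^ m + (X 2) ^ n,
          C a * X 0 + C b * X 2}) :=
  stmt_14_general k m n hm hgcd a b hab
end
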